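/- Let X ∈ ℝ^{n×p}, y ∈ ℝ^n, with XᵀX invertible and all leverages h_i = x_i(XᵀX)⁻¹x_iᵀ ≠ 1. Then the PRESS statistic (1/n)∑_{i=1}^n (y_i − x_i β̂(i))² equals (1/n)∑_{i=1}^n e_i²/(1 − h_i)², where e_i = y_i − x_i β̂ are the full-data OLS residuals and β̂(i) is the leave-one-out OLS estimator. -/
import Mathlib


open Matrix

/-- The PRESS statistic for OLS: the LOOCV error equals the closed form with residuals
and leverages from a single fit. -/
theorem ols_press_statistic {n p : ℕ} (X : Matrix (Fin n) (Fin p) ℝ) (y : Fin n → ℝ)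
    (hX : IsUnit (Xᵀ * X).det)
    (βi : Fin n → Fin p → ℝ)
    (hβi : ∀ i : Fin n,
      βi i = (((Matrix.of fun (j : {j : Fin n // j ≠ i}) k => X j.val k)ᵀ *
          (Matrix.of fun (j : {j : Fin n // j ≠ i}) k => X j.val k))⁻¹ *
          (Matrix.of fun (j : {j : Fin n // j ≠ i}) k => X j.val k)ᵀ).mulVec
          fun j => y j.val)
    (hinv : ∀ i : Fin n,
      IsUnit ((Matrix.of fun (j : {j : Fin n // j ≠ i}) k => X j.val k)ᵀ *
        (Matrix.of fun (j : {j : Fin n // j ≠ i}) k => X j.val k)).det)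
    (hlev : ∀ i, X i ⬝ᵥ ((Xᵀ * X)⁻¹).mulVec (X i) ≠ 1) :
    (n : ℝ)⁻¹ * ∑ i, (y i - X i ⬝ᵥ βi i) ^ 2 =
      (n : ℝ)⁻¹ * ∑ i, (y i - X i ⬝ᵥ ((Xᵀ * X)⁻¹ * Xᵀ).mulVec y) ^ 2 /
        (1 - X i ⬝ᵥ ((Xᵀ * X)⁻¹).mulVec (X i)) ^ 2 := by
  congr 1
  refine Finset.sum_congr rfl fun i _ => ?_
  set A := Xᵀ * X with hA
  set β : Fin p → ℝ := (A⁻¹ * Xᵀ).mulVec y with hβ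
  set xi : Fin p → ℝ := X i with hxi
  set h : ℝ := xi ⬝ᵥ A⁻¹.mulVec xi with hh
  have hh1 : (1 : ℝ) - h ≠ 0 := sub_ne_zero.mpr (Ne.symm (hlev i))
  set e : ℝ := y i - xi ⬝ᵥ β with he
  set N : Matrix {j : Fin n // j ≠ i} (Fin p) ℝ :=
    Matrix.of fun (j : {j : Fin n // j ≠ i}) k => X j.val k with hN
  set M : Matrix (Fin p) (Fin p) ℝ := Nᵀ * N with hM
  have hMdet : IsUnit M.det := hinv i
  -- sum over the subtype
  have hsum : ∀ f : Fin n → ℝ, ∑ j : {j : Fin n // j ≠ i}, f j.val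
      = (∑ j, f j) - f i := by
    intro f
    rw [← Finset.sum_subtype (Finset.univ.erase i) (by simp) f]
    rw [Finset.sum_erase_eq_sub (Finset.mem_univ i)]
  -- M = A - xi xiᵀ
  have hM_eq' : M = A - Matrix.vecMulVec xi xi := by
    ext k l
    simp only [hM, hA, Matrix.mul_apply, Matrix.transpose_apply, Matrix.of_apply,
      Matrix.sub_apply, Matrix.vecMulVec_apply, hxi]
    exact hsum (fun j => X j k * X j l)
  have hM_eq : ∀ v : Fin p → ℝ, M.mulVec v = A.mulVec v - (xi ⬝ᵥ v) • xi := by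
    intro v
    rw [hM_eq', Matrix.sub_mulVec]
    congr 1
    ext k
    simp only [Matrix.mulVec, Matrix.vecMulVec_apply, dotProduct, Pi.smul_apply,
      smul_eq_mul, Finset.sum_mul]
    exact Finset.sum_congr rfl fun j _ => by ring
  -- Nᵀ y' = Xᵀ y - y i • xi
  have hNy : Nᵀ.mulVec (fun j : {j : Fin n // j ≠ i} => y j.val)
      = Xᵀ.mulVec y - y i • xi := by
    ext k
    simp only [Matrix.mulVec, Matrix.transpose_apply, Matrix.of_apply, dotProduct,
      Pi.sub_apply, Pi.smul_apply, smul_eq_mul, hN, hxi]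
    have := hsum (fun j => X j k * y j)
    rw [this]
    ring
  have hAw : A.mulVec (A⁻¹.mulVec xi) = xi := by
    rw [Matrix.mulVec_mulVec, Matrix.mul_nonsing_inv _ hX, Matrix.one_mulVec]
  have hAβ : A.mulVec β = Xᵀ.mulVec y := by
    rw [hβ, Matrix.mulVec_mulVec, ← Matrix.mul_assoc, Matrix.mul_nonsing_inv _ hX,
      Matrix.one_mul]
  have hMβi : M.mulVec (βi i) = Xᵀ.mulVec y - y i • xi := by
    rw [hβi i, Matrix.mulVec_mulVec, ← Matrix.mul_assoc, ← hM,
      Matrix.mul_nonsing_inv _ hMdet, Matrix.one_mul, hNy]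
  have h1 : M.mulVec (β - (e / (1 - h)) • A⁻¹.mulVec xi)
      = Xᵀ.mulVec y - y i • xi := by
    rw [hM_eq, Matrix.mulVec_sub, Matrix.mulVec_smul, hAβ, hAw, dotProduct_sub,
      dotProduct_smul, ← hh]
    ext k
    simp only [Pi.sub_apply, Pi.smul_apply, smul_eq_mul]
    field_simp
    ring
  have h2 : βi i = β - (e / (1 - h)) • A⁻¹.mulVec xi := by
    have h3 := hMβi.trans h1.symm
    have h4 := congrArg M⁻¹.mulVec h3
    simpa [Matrix.mulVec_mulVec, Matrix.nonsing_inv_mul _ hMdet,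
      Matrix.one_mulVec] using h4
  rw [h2]
  rw [dotProduct_sub, dotProduct_smul, ← hh, smul_eq_mul]
  have key : y i - (xi ⬝ᵥ β - e / (1 - h) * h) = e / (1 - h) := by
    rw [he]
    field_simp
    ring
  rw [key, div_pow]
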